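/- arXiv:0801.2926 — 9 statements merged into one kernel-verified Lean document; each statement's English description precedes it below -/
import Mathlib

section
/- If f : [a,b] → ℝ is continuous, then its monotone reordering f^# : (0, b-a] → ℝ is continuous. -/
/-!
The distribution function `s ↦ |{x ∈ [a, b] | f x ≤ s}|` is monotone, and it increases strictly
across every value of `f`: by continuity, `f` stays close to that value on a set of positive
measure. Writing `f '' [a, b] = [m, M]`, this makes `f^#` a left inverse of the distribution
function on `(m, M]`, so the monotone function `f^#` maps `(0, b - a]` onto `(m, M]` or `[m, M]`.
A monotone function whose image is an interval has no jumps.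
-/

open MeasureTheory Set

/-- The monotone reordering of `f : [a,b] → ℝ`:
`f^#(t) = inf { s : t ≤ length of {t' ∈ [a,b] : f t' ≤ s} }`. -/
noncomputable def monRe (f : ℝ → ℝ) (a b : ℝ) (t : ℝ) : ℝ :=
  sInf { s : ℝ | t ≤ (volume { x ∈ Icc a b | f x ≤ s }).toReal }

open Filter Topology

theorem MonotoneOn.continuousOn_of_ordConnected_image {α β : Type*} [LinearOrder α]
    [TopologicalSpace α] [OrderTopology α] [LinearOrder β] [TopologicalSpace β] [OrderTopology β]
    [DenselyOrdered β] {f : α → β} {s : Set α} (hf : MonotoneOn f s) (hs : s.OrdConnected)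
    (hfs : (f '' s).OrdConnected) : ContinuousOn f s := by
  rw [continuousOn_iff_continuous_domRestrict]
  let g : s → f '' s := fun x => ⟨f x, mem_image_of_mem f x.2⟩
  have hg_surj : Function.Surjective g := by
    rintro ⟨_, x, hx, rfl⟩
    exact ⟨⟨x, hx⟩, rfl⟩
  exact continuous_subtype_val.comp
    (Monotone.continuous_of_surjective (f := g) (fun x y hxy => hf x.2 y.2 hxy) hg_surj)

theorem Set.ordConnected_of_Ioc_subset_of_subset_Icc {α : Type*} [LinearOrder α] {S : Set α}
    {m M : α} (hIoc : Ioc m M ⊆ S) (hIcc : S ⊆ Icc m M) : S.OrdConnected := by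
  refine ⟨fun x hx y hy z hz => ?_⟩
  rcases hz.1.eq_or_lt with rfl | hxz
  · exact hx
  · exact hIoc ⟨(hIcc hx).1.trans_lt hxz, hz.2.trans (hIcc hy).2⟩

theorem measure_pos_of_mem_nhdsWithin {X : Type*} [TopologicalSpace X] [MeasurableSpace X]
    (μ : Measure X) [μ.IsOpenPosMeasure] {s t : Set X} {x : X}
    (hx : x ∈ closure (interior s)) (ht : t ∈ 𝓝[s] x) : 0 < μ t := by
  obtain ⟨V, hV, hxV, hVt⟩ := mem_nhdsWithin.1 ht
  have hpos : 0 < μ (V ∩ interior s) :=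
    (hV.inter isOpen_interior).measure_pos μ (mem_closure_iff.1 hx V hV hxV)
  exact hpos.trans_le (measure_mono fun y hy => hVt ⟨hy.1, interior_subset hy.2⟩)

noncomputable def sublevelVolume (f : ℝ → ℝ) (a b s : ℝ) : ℝ :=
  (volume { x ∈ Icc a b | f x ≤ s }).toReal

section Sublevel

variable {f : ℝ → ℝ} {a b : ℝ}

theorem volume_sublevel_ne_top (s : ℝ) : volume { x ∈ Icc a b | f x ≤ s } ≠ ⊤ :=
  ne_top_of_le_ne_top (by simp [Real.volume_Icc]) (measure_mono (sep_subset _ _))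

theorem monotone_sublevelVolume : Monotone (sublevelVolume f a b) := fun _ c hsc =>
  ENNReal.toReal_mono (volume_sublevel_ne_top c) (measure_mono fun _ hx => ⟨hx.1, hx.2.trans hsc⟩)

theorem sublevelVolume_of_forall_lt {s : ℝ} (h : ∀ x ∈ Icc a b, s < f x) :
    sublevelVolume f a b s = 0 := by
  have : { x ∈ Icc a b | f x ≤ s } = ∅ :=
    eq_empty_of_forall_notMem fun x hx => (h x hx.1).not_ge hx.2
  rw [sublevelVolume, this, measure_empty, ENNReal.toReal_zero]

theorem sublevelVolume_of_forall_le (hab : a ≤ b) {s : ℝ} (h : ∀ x ∈ Icc a b, f x ≤ s) :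
    sublevelVolume f a b s = b - a := by
  have : { x ∈ Icc a b | f x ≤ s } = Icc a b := sep_eq_self_iff_mem_true.2 h
  rw [sublevelVolume, this, Real.volume_Icc, ENNReal.toReal_ofReal (sub_nonneg.2 hab)]

theorem isClosed_sublevel (hf : ContinuousOn f (Icc a b)) (s : ℝ) :
    IsClosed { x ∈ Icc a b | f x ≤ s } :=
  hf.preimage_isClosed_of_isClosed isClosed_Icc isClosed_Iic

/-- `{y ∈ [a, b] | f y ∈ (s, c)}` is a neighbourhood of `x` within `[a, b]`, so it has positive
measure. -/
theorem sublevelVolume_lt_of_mem_Ioo (hab : a < b) (hf : ContinuousOn f (Icc a b)) {x s c : ℝ}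
    (hx : x ∈ Icc a b) (hfx : f x ∈ Ioo s c) : sublevelVolume f a b s < sublevelVolume f a b c := by
  set T := { y ∈ Icc a b | f y ∈ Ioo s c }
  have hT : 0 < volume T := by
    refine measure_pos_of_mem_nhdsWithin volume (by rwa [interior_Icc, closure_Ioo hab.ne]) ?_
    exact inter_mem self_mem_nhdsWithin
      ((hf x hx).preimage_mem_nhdsWithin (isOpen_Ioo.mem_nhds hfx))
  have hdisj : Disjoint { y ∈ Icc a b | f y ≤ s } T :=
    disjoint_left.2 fun y hy hyT => hyT.2.1.not_ge hy.2
  have hsub : { y ∈ Icc a b | f y ≤ s } ∪ T ⊆ { y ∈ Icc a b | f y ≤ c } := by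
    rintro y (hy | hy)
    · exact ⟨hy.1, hy.2.trans (hfx.1.trans hfx.2).le⟩
    · exact ⟨hy.1, hy.2.2.le⟩
  refine (ENNReal.toReal_lt_toReal (volume_sublevel_ne_top s) (volume_sublevel_ne_top c)).2 ?_
  calc volume { y ∈ Icc a b | f y ≤ s }
      < volume { y ∈ Icc a b | f y ≤ s } + volume T :=
        ENNReal.lt_add_right (volume_sublevel_ne_top s) hT.ne'
    _ = volume ({ y ∈ Icc a b | f y ≤ s } ∪ T) :=
        (measure_union' hdisj (isClosed_sublevel hf s).measurableSet).symm
    _ ≤ volume { y ∈ Icc a b | f y ≤ c } := measure_mono hsub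

end Sublevel

section MonotoneReordering

variable {f : ℝ → ℝ} {a b m M : ℝ}

theorem monRe_eq_sInf (t : ℝ) : monRe f a b t = sInf { s | t ≤ sublevelVolume f a b s } := rfl

theorem apply_mem_Icc_of_image_eq (him : f '' Icc a b = Icc m M) {x : ℝ} (hx : x ∈ Icc a b) :
    f x ∈ Icc m M :=
  him ▸ mem_image_of_mem f hx

theorem sublevelVolume_max (hab : a ≤ b) (him : f '' Icc a b = Icc m M) :
    sublevelVolume f a b M = b - a :=
  sublevelVolume_of_forall_le hab fun _ hx => (apply_mem_Icc_of_image_eq him hx).2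

theorem le_of_le_sublevelVolume (him : f '' Icc a b = Icc m M) {t s : ℝ} (ht : 0 < t)
    (hs : t ≤ sublevelVolume f a b s) : m ≤ s := by
  by_contra! hsm
  have : sublevelVolume f a b s = 0 := sublevelVolume_of_forall_lt fun x hx =>
    hsm.trans_le (apply_mem_Icc_of_image_eq him hx).1
  linarith

theorem bddBelow_setOf_le_sublevelVolume (him : f '' Icc a b = Icc m M) {t : ℝ} (ht : 0 < t) :
    BddBelow { s | t ≤ sublevelVolume f a b s } :=
  ⟨m, fun _ hs => le_of_le_sublevelVolume him ht hs⟩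

theorem max_mem_setOf_le_sublevelVolume (hab : a ≤ b) (him : f '' Icc a b = Icc m M) {t : ℝ}
    (ht : t ≤ b - a) : M ∈ { s | t ≤ sublevelVolume f a b s } :=
  ht.trans_eq (sublevelVolume_max hab him).symm

theorem monRe_mem_Icc (hab : a ≤ b) (him : f '' Icc a b = Icc m M) {t : ℝ}
    (ht : t ∈ Ioc 0 (b - a)) : monRe f a b t ∈ Icc m M :=
  ⟨le_csInf ⟨M, max_mem_setOf_le_sublevelVolume hab him ht.2⟩ fun _ hs =>
      le_of_le_sublevelVolume him ht.1 hs,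
    csInf_le (bddBelow_setOf_le_sublevelVolume him ht.1)
      (max_mem_setOf_le_sublevelVolume hab him ht.2)⟩

theorem monotoneOn_monRe (hab : a ≤ b) (him : f '' Icc a b = Icc m M) :
    MonotoneOn (monRe f a b) (Ioc 0 (b - a)) := fun _ ht₁ _ ht₂ h₁₂ =>
  csInf_le_csInf (bddBelow_setOf_le_sublevelVolume him ht₁.1)
    ⟨M, max_mem_setOf_le_sublevelVolume hab him ht₂.2⟩ fun _ hs => h₁₂.trans hs

/-- `max m ((s + z) / 2)` is a value of `f` strictly between `s` and `z`. -/
theorem sublevelVolume_lt_of_lt (hab : a < b) (hf : ContinuousOn f (Icc a b))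
    (him : f '' Icc a b = Icc m M) {s z : ℝ} (hz : z ∈ Ioc m M) (hsz : s < z) :
    sublevelVolume f a b s < sublevelVolume f a b z := by
  have hw : max m ((s + z) / 2) ∈ f '' Icc a b :=
    him ▸ ⟨le_max_left _ _, max_le (hz.1.le.trans hz.2) (by linarith [hz.2])⟩
  obtain ⟨x, hx, hfx⟩ := hw
  refine sublevelVolume_lt_of_mem_Ioo hab hf hx ⟨?_, ?_⟩ <;> rw [hfx]
  · exact lt_max_of_lt_right (by linarith)
  · exact max_lt hz.1 (by linarith)

theorem sublevelVolume_mem_Ioc (hab : a < b) (hf : ContinuousOn f (Icc a b))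
    (him : f '' Icc a b = Icc m M) {z : ℝ} (hz : z ∈ Ioc m M) :
    sublevelVolume f a b z ∈ Ioc 0 (b - a) := by
  refine ⟨?_, ?_⟩
  · calc (0 : ℝ) ≤ sublevelVolume f a b (m - 1) := ENNReal.toReal_nonneg
      _ < sublevelVolume f a b z := sublevelVolume_lt_of_lt hab hf him hz (by linarith [hz.1])
  · calc sublevelVolume f a b z ≤ sublevelVolume f a b M := monotone_sublevelVolume hz.2
      _ = b - a := sublevelVolume_max hab.le him

theorem monRe_sublevelVolume (hab : a < b) (hf : ContinuousOn f (Icc a b))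
    (him : f '' Icc a b = Icc m M) {z : ℝ} (hz : z ∈ Ioc m M) :
    monRe f a b (sublevelVolume f a b z) = z := by
  have hpos := (sublevelVolume_mem_Ioc hab hf him hz).1
  have hz_mem : z ∈ { s | sublevelVolume f a b z ≤ sublevelVolume f a b s } :=
    le_refl (sublevelVolume f a b z)
  rw [monRe_eq_sInf]
  refine le_antisymm (csInf_le (bddBelow_setOf_le_sublevelVolume him hpos) hz_mem)
    (le_csInf ⟨z, hz_mem⟩ ?_)
  intro s hs
  by_contra! hsz
  exact (sublevelVolume_lt_of_lt hab hf him hz hsz).not_ge hs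

theorem Ioc_subset_image_monRe (hab : a < b) (hf : ContinuousOn f (Icc a b))
    (him : f '' Icc a b = Icc m M) : Ioc m M ⊆ monRe f a b '' Ioc 0 (b - a) := fun _ hz =>
  ⟨_, sublevelVolume_mem_Ioc hab hf him hz, monRe_sublevelVolume hab hf him hz⟩

end MonotoneReordering

theorem monRe_continuousOn_general (f : ℝ → ℝ) (a b : ℝ)
    (hf : ContinuousOn f (Icc a b)) :
    ContinuousOn (monRe f a b) (Ioc 0 (b - a)) := by
  rcases le_or_gt b a with hba | hab
  · rw [Ioc_eq_empty (by linarith)]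
    exact continuousOn_empty _
  obtain ⟨m, M, him⟩ : ∃ m M, f '' Icc a b = Icc m M := ⟨_, _, hf.image_Icc hab.le⟩
  have himage : (monRe f a b '' Ioc 0 (b - a)).OrdConnected :=
    ordConnected_of_Ioc_subset_of_subset_Icc (Ioc_subset_image_monRe hab hf him)
      (image_subset_iff.2 fun _ ht => monRe_mem_Icc hab.le him ht)
  exact (monotoneOn_monRe hab.le him).continuousOn_of_ordConnected_image ordConnected_Ioc himage

theorem monRe_continuousOn (f : ℝ → ℝ) (a b : ℝ) (hab : a ≤ b)
    (hf : ContinuousOn f (Icc a b)) :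
    ContinuousOn (monRe f a b) (Ioc 0 (b - a)) :=
  monRe_continuousOn_general f a b hf
end

section
/- Let f : [a,b] → ℝ be continuous and uniformly continuous with modulus: for ε > 0 there is δ > 0 such that |t - t'| < δ implies |f(t) - f(t')| < ε. Then for all t, t' ∈ (0, b-a] with |t - t'| < δ, the monotone reordering satisfies |f^#(t) - f^#(t')| < 2ε. -/
/-!
Write `D(s)` for the length of the sublevel set `{f ≤ s}` of `f` on `[a,b]`, so that `f^#` is the
generalized inverse of `D`. By the modulus of continuity, the `δ`-neighbourhood of `{f ≤ s}`
inside `[a,b]` lies in `{f ≤ s + ε}`, and on the line such a neighbourhood of a nonempty closed set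
is longer by `δ` unless it is all of `[a,b]`. Hence `D(s + ε) ≥ min (D(s) + δ) (b - a)`, which gives
`f^#(t') ≤ f^#(t) + ε` whenever `t' < t + δ`; by symmetry `|f^#(t) - f^#(t')| ≤ ε < 2ε`.
-/

open MeasureTheory Set

open Metric

section Thickening

variable {a b δ : ℝ} {A : Set ℝ}

/-- The interval runs from the point of `A` nearest to `z` towards `z`. -/
lemma exists_Ioo_subset_thickening_disjoint (hA : IsClosed A) (hne : A.Nonempty)
    (hsub : A ⊆ Icc a b) {z : ℝ} (hz : z ∈ Icc a b) (hzA : z ∉ thickening δ A) :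
    ∃ c, Ioo c (c + δ) ⊆ Icc a b ∩ thickening δ A ∧ Disjoint A (Ioo c (c + δ)) := by
  obtain ⟨m, hmA, hm⟩ :=
    (isCompact_Icc.of_isClosed_subset hA hsub).exists_infDist_eq_dist hne z
  have hδm : δ ≤ dist z m := by
    rw [← hm, ← not_lt, ← mem_thickening_iff_infDist_lt hne]
    exact hzA
  have hnearest : ∀ x ∈ A, dist z m ≤ dist z x := fun x hx => hm ▸ infDist_le_dist_of_mem hx
  have hmIcc := hsub hmA
  rw [Real.dist_eq] at hδm
  rcases le_total m z with hmz | hzm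
  · rw [abs_of_nonneg (sub_nonneg.2 hmz)] at hδm
    refine ⟨m, fun x hx => ⟨⟨by linarith [hx.1, hmIcc.1], by linarith [hx.2, hz.2]⟩,
      mem_thickening_iff.2 ⟨m, hmA, ?_⟩⟩, disjoint_left.2 fun x hxA hx => ?_⟩
    · rw [Real.dist_eq, abs_of_pos (sub_pos.2 hx.1)]
      linarith [hx.2]
    · have := hnearest x hxA
      rw [Real.dist_eq, Real.dist_eq, abs_of_nonneg (sub_nonneg.2 hmz),
        abs_of_nonneg (by linarith [hx.2])] at this
      linarith [hx.1]
  · rw [abs_of_nonpos (sub_nonpos.2 hzm)] at hδm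
    refine ⟨m - δ, fun x hx => ⟨⟨by linarith [hx.1, hz.1], by linarith [hx.2, hmIcc.2]⟩,
      mem_thickening_iff.2 ⟨m, hmA, ?_⟩⟩, disjoint_left.2 fun x hxA hx => ?_⟩
    · rw [Real.dist_eq, abs_of_neg (by linarith [hx.2])]
      linarith [hx.1]
    · have := hnearest x hxA
      rw [Real.dist_eq, Real.dist_eq, abs_of_nonpos (sub_nonpos.2 hzm),
        abs_of_nonpos (by linarith [hx.1])] at this
      linarith [hx.2]

lemma min_volume_real_add_le_volume_real_thickening (hδ : 0 < δ) (hA : IsClosed A)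
    (hne : A.Nonempty) (hsub : A ⊆ Icc a b) :
    min (volume.real A + δ) (b - a) ≤ volume.real (Icc a b ∩ thickening δ A) := by
  have hfin : ∀ {S : Set ℝ}, S ⊆ Icc a b → volume S ≠ ⊤ :=
    fun hS => measure_ne_top_of_subset hS measure_Icc_lt_top.ne
  by_cases hcov : Icc a b ⊆ thickening δ A
  · obtain ⟨y, hy⟩ := hne
    have hab : a ≤ b := (hsub hy).1.trans (hsub hy).2
    rw [inter_eq_left.2 hcov, Real.volume_real_Icc_of_le hab]
    exact min_le_right _ _
  · obtain ⟨z, hz, hzA⟩ := not_subset.1 hcov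
    obtain ⟨c, hcsub, hcdisj⟩ := exists_Ioo_subset_thickening_disjoint hA hne hsub hz hzA
    have hAsub : A ⊆ Icc a b ∩ thickening δ A := subset_inter hsub (self_subset_thickening hδ A)
    calc min (volume.real A + δ) (b - a) ≤ volume.real A + δ := min_le_left _ _
      _ = volume.real (A ∪ Ioo c (c + δ)) := by
        rw [measureReal_union hcdisj measurableSet_Ioo (hfin hsub)
          (hfin (hcsub.trans inter_subset_left)), Real.volume_real_Ioo_of_le (by linarith),
          add_sub_cancel_left]
      _ ≤ volume.real (Icc a b ∩ thickening δ A) :=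
        measureReal_mono (union_subset hAsub hcsub) (hfin inter_subset_left)

end Thickening

section SublevelSets

variable {f : ℝ → ℝ} {a b ε δ : ℝ}

lemma min_volume_real_sublevel_add_le (hδ : 0 < δ) (hf : ContinuousOn f (Icc a b))
    (hmod : ∀ t ∈ Icc a b, ∀ t' ∈ Icc a b, |t - t'| < δ → |f t - f t'| ≤ ε) {s : ℝ}
    (hs : {x ∈ Icc a b | f x ≤ s}.Nonempty) :
    min (volume.real {x ∈ Icc a b | f x ≤ s} + δ) (b - a) ≤
      volume.real {x ∈ Icc a b | f x ≤ s + ε} := by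
  refine (min_volume_real_add_le_volume_real_thickening hδ
    (hf.preimage_isClosed_of_isClosed isClosed_Icc isClosed_Iic) hs fun x hx => hx.1).trans
    (measureReal_mono ?_ (measure_ne_top_of_subset (fun x hx => hx.1) measure_Icc_lt_top.ne))
  rintro x ⟨hx, hxA⟩
  obtain ⟨y, ⟨hy, hys : f y ≤ s⟩, hxy⟩ := mem_thickening_iff.1 hxA
  have := (abs_le.1 (hmod x hx y hy hxy)).2
  exact ⟨hx, by linarith⟩

lemma nonempty_monRe_set (hf : ContinuousOn f (Icc a b)) {t : ℝ} (ht : t ≤ b - a) :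
    {s | t ≤ (volume {x ∈ Icc a b | f x ≤ s}).toReal}.Nonempty := by
  obtain ⟨M, hM⟩ := isCompact_Icc.bddAbove_image hf
  refine ⟨M, ?_⟩
  have hlevel : {x ∈ Icc a b | f x ≤ M} = Icc a b :=
    sep_eq_self_iff_mem_true.2 fun x hx => hM (mem_image_of_mem f hx)
  change t ≤ volume.real _
  rw [hlevel, Real.volume_real_Icc]
  exact ht.trans (le_max_left _ _)

lemma bddBelow_monRe_set (hf : ContinuousOn f (Icc a b)) {t : ℝ} (ht : 0 < t) :
    BddBelow {s | t ≤ (volume {x ∈ Icc a b | f x ≤ s}).toReal} := by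
  obtain ⟨m, hm⟩ := isCompact_Icc.bddBelow_image hf
  refine ⟨m, fun s hs => ?_⟩
  obtain ⟨x, hx, hxs⟩ := nonempty_of_measureReal_ne_zero (ht.trans_le hs).ne'
  exact (hm (mem_image_of_mem f hx)).trans hxs

lemma monRe_le_monRe_add (hδ : 0 < δ) (hf : ContinuousOn f (Icc a b))
    (hmod : ∀ t ∈ Icc a b, ∀ t' ∈ Icc a b, |t - t'| < δ → |f t - f t'| ≤ ε) {t t' : ℝ}
    (ht : t ∈ Ioc 0 (b - a)) (ht' : t' ∈ Ioc 0 (b - a)) (htt' : t' < t + δ) :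
    monRe f a b t' ≤ monRe f a b t + ε := by
  rw [← sub_le_iff_le_add]
  refine le_csInf (nonempty_monRe_set hf ht.2) fun s hs => ?_
  rw [sub_le_iff_le_add]
  refine csInf_le (bddBelow_monRe_set hf ht'.1) ?_
  have hs : t ≤ volume.real {x ∈ Icc a b | f x ≤ s} := hs
  have hne : {x ∈ Icc a b | f x ≤ s}.Nonempty :=
    nonempty_of_measureReal_ne_zero (ht.1.trans_le hs).ne'
  show t' ≤ volume.real {x ∈ Icc a b | f x ≤ s + ε}
  calc t' ≤ min (t + δ) (b - a) := le_min htt'.le ht'.2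
    _ ≤ min (volume.real {x ∈ Icc a b | f x ≤ s} + δ) (b - a) := by gcongr
    _ ≤ _ := min_volume_real_sublevel_add_le hδ hf hmod hne

end SublevelSets

theorem monRe_uniform_modulus_general (f : ℝ → ℝ) (a b : ℝ)
    (hf : ContinuousOn f (Icc a b)) (ε δ : ℝ) (hε : 0 < ε) (hδ : 0 < δ)
    (hmod : ∀ t ∈ Icc a b, ∀ t' ∈ Icc a b, |t - t'| < δ → |f t - f t'| < ε) :
    ∀ t ∈ Ioc 0 (b - a), ∀ t' ∈ Ioc 0 (b - a), |t - t'| < δ →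
      |monRe f a b t - monRe f a b t'| < 2 * ε := by
  intro t ht t' ht' htt'
  have hmod' := fun x hx y hy hxy => (hmod x hx y hy hxy).le
  have h₁ := monRe_le_monRe_add hδ hf hmod' ht ht' (by linarith [abs_sub_lt_iff.1 htt'])
  have h₂ := monRe_le_monRe_add hδ hf hmod' ht' ht (by linarith [abs_sub_lt_iff.1 htt'])
  rw [abs_sub_lt_iff]
  constructor <;> linarith

theorem monRe_uniform_modulus (f : ℝ → ℝ) (a b : ℝ) (hab : a ≤ b)
    (hf : ContinuousOn f (Icc a b)) (ε δ : ℝ) (hε : 0 < ε) (hδ : 0 < δ)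
    (hmod : ∀ t ∈ Icc a b, ∀ t' ∈ Icc a b, |t - t'| < δ → |f t - f t'| < ε) :
    ∀ t ∈ Ioc 0 (b - a), ∀ t' ∈ Ioc 0 (b - a), |t - t'| < δ →
      |monRe f a b t - monRe f a b t'| < 2 * ε :=
  monRe_uniform_modulus_general f a b hf ε δ hε hδ hmod
end

section
/- If f : [a,b] → ℝ is continuous and t' ∈ (0, b-a], then the Lebesgue measure of the sublevel set {t ∈ [a,b] : f(t) < f^#(t')} is at most t'. -/
open MeasureTheory Set

/-! Each non-strict sublevel set below level `f^#(t')` has measure less than `t'`, since its level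
lies below the infimum defining `f^#(t')`; the strict sublevel set at `f^#(t')` is the increasing
union of such sets, so continuity of the measure from below gives the bound `t'`. The infimum is
not a junk value because `f`, being continuous on a compact set, is bounded below there. -/

section Sublevel

variable {α : Type*} [MeasurableSpace α] {μ : Measure α} {K : Set α} {f : α → ℝ}

theorem measure_sep_lt_le_of_forall_lt {m : ℝ} {c : ENNReal}
    (h : ∀ s < m, μ {x ∈ K | f x ≤ s} ≤ c) : μ {x ∈ K | f x < m} ≤ c := by
  obtain ⟨u, hu_mono, hu_lt, hu_lim⟩ := exists_seq_strictMono_tendsto m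
  have hUnion : {x ∈ K | f x < m} = ⋃ n, {x ∈ K | f x ≤ u n} := by
    ext x
    have := congrArg (f x ∈ ·) (iUnion_Iic_eq_Iio_of_lt_of_tendsto hu_lt hu_lim)
    simp_all
  have hmono : Monotone fun n ↦ {x ∈ K | f x ≤ u n} :=
    fun i j hij x hx ↦ ⟨hx.1, hx.2.trans (hu_mono.monotone hij)⟩
  rw [hUnion, hmono.measure_iUnion]
  exact iSup_le fun n ↦ h _ (hu_lt n)

theorem bddBelow_setOf_le_toReal_measure_sep_le [TopologicalSpace α] (hK : IsCompact K)
    (hf : ContinuousOn f K) {t : ℝ} (ht : 0 < t) :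
    BddBelow {s : ℝ | t ≤ (μ {x ∈ K | f x ≤ s}).toReal} := by
  obtain ⟨L, hL⟩ := hK.bddBelow_image hf
  refine ⟨L, fun s hs ↦ not_lt.1 fun hsL ↦ ?_⟩
  have hempty : {x ∈ K | f x ≤ s} = ∅ :=
    eq_empty_of_forall_notMem fun x hx ↦ (hsL.trans_le (hL (mem_image_of_mem f hx.1))).not_ge hx.2
  simp only [mem_ofPred_eq, hempty, measure_empty, ENNReal.toReal_zero] at hs
  exact hs.not_gt ht

end Sublevel

theorem volume_sep_le_le_of_lt_monRe {f : ℝ → ℝ} {a b t s : ℝ} (hf : ContinuousOn f (Icc a b))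
    (ht : 0 < t) (hs : s < monRe f a b t) :
    volume {x ∈ Icc a b | f x ≤ s} ≤ ENNReal.ofReal t := by
  have hfin : volume {x ∈ Icc a b | f x ≤ s} ≠ ⊤ :=
    (measure_mono (sep_subset _ _)).trans_lt measure_Icc_lt_top |>.ne
  have hsnot :=
    notMem_of_lt_csInf hs (bddBelow_setOf_le_toReal_measure_sep_le isCompact_Icc hf ht)
  rw [ENNReal.le_ofReal_iff_toReal_le hfin ht.le]
  exact (not_le.1 hsnot).le

theorem measure_strict_sublevel_le_general (f : ℝ → ℝ) (a b : ℝ)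
    (hf : ContinuousOn f (Icc a b)) (t' : ℝ) (ht' : t' ∈ Ioc 0 (b - a)) :
    (volume { t ∈ Icc a b | f t < monRe f a b t' }).toReal ≤ t' :=
  ENNReal.toReal_le_of_le_ofReal ht'.1.le <|
    measure_sep_lt_le_of_forall_lt fun _ hs ↦ volume_sep_le_le_of_lt_monRe hf ht'.1 hs

theorem measure_strict_sublevel_le (f : ℝ → ℝ) (a b : ℝ) (hab : a ≤ b)
    (hf : ContinuousOn f (Icc a b)) (t' : ℝ) (ht' : t' ∈ Ioc 0 (b - a)) :
    (volume { t ∈ Icc a b | f t < monRe f a b t' }).toReal ≤ t' :=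
  measure_strict_sublevel_le_general f a b hf t' ht'
end

section
/- If f : [a,b] → ℝ is continuous and t' ∈ (0, b-a] satisfies f^#(t') > min f on [a,b], then f^#(t') is a value attained by f on [a,b]. -/
open MeasureTheory Set

theorem monRe_is_value (f : ℝ → ℝ) (a b : ℝ) (hab : a ≤ b)
    (hf : ContinuousOn f (Icc a b)) (t' : ℝ) (ht' : t' ∈ Ioc 0 (b - a))
    (h : sInf (f '' Icc a b) < monRe f a b t') :
    ∃ t ∈ Icc a b, f t = monRe f a b t' := by
  set K := f '' Icc a b with hK
  have hKne : K.Nonempty := (nonempty_Icc.2 hab).image f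
  have hKc : IsCompact K := isCompact_Icc.image_of_continuousOn hf
  set m := sInf K with hm
  set M := sSup K with hM
  have hmK : m ∈ K := hKc.sInf_mem hKne
  have hMK : M ∈ K := hKc.sSup_mem hKne
  have hbb : BddBelow K := hKc.bddBelow
  have hba : BddAbove K := hKc.bddAbove
  have hfm : ∀ x ∈ Icc a b, m ≤ f x := fun x hx => csInf_le hbb (mem_image_of_mem f hx)
  have hfM : ∀ x ∈ Icc a b, f x ≤ M := fun x hx => le_csSup hba (mem_image_of_mem f hx)
  set S := { s : ℝ | t' ≤ (volume { x ∈ Icc a b | f x ≤ s }).toReal } with hS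
  have hMS : M ∈ S := by
    have : { x ∈ Icc a b | f x ≤ M } = Icc a b := by
      ext x; simp only [mem_setOf_eq, mem_sep_iff, and_iff_left_iff_imp]
      exact fun hx => hfM x hx
    simp only [hS, mem_setOf_eq, this, Real.volume_Icc,
      ENNReal.toReal_ofReal (by linarith : (0:ℝ) ≤ b - a)]
    exact ht'.2
  have hSbb : BddBelow S := by
    refine ⟨m, fun s hs => ?_⟩
    by_contra hsm
    push_neg at hsm
    have : { x ∈ Icc a b | f x ≤ s } = (∅ : Set ℝ) := by
      ext x; simp only [mem_sep_iff, mem_empty_iff_false, iff_false, not_and]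
      intro hx hfx
      exact absurd (le_trans (hfm x hx) hfx) (not_le.2 hsm)
    simp only [hS, mem_setOf_eq, this, measure_empty, ENNReal.toReal_zero] at hs
    exact absurd (lt_of_lt_of_le ht'.1 hs) (lt_irrefl 0)
  have hle : monRe f a b t' ≤ M := csInf_le hSbb hMS
  have hmem : monRe f a b t' ∈ Icc m M := ⟨le_of_lt h, hle⟩
  have hpc : IsPreconnected K := (isPreconnected_Icc).image f hf
  have : Icc m M ⊆ K := hpc.Icc_subset hmK hMK
  obtain ⟨t, ht, hft⟩ := this hmem
  exact ⟨t, ht, hft⟩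
end

section
/- Let f : [a,b] → ℝ be continuous. For every ε > 0 there exists δ > 0 such that for every closed subinterval [a',b'] ⊆ [a,b] with (b - a) - (b' - a') < δ, the restriction of f^# to (0, b'-a'] and the monotone reordering of f restricted to [a',b'] differ by less than ε in supremum norm on (0, b'-a']. -/
open MeasureTheory Set

namespace MonReAux


noncomputable def mu (f : ℝ → ℝ) (a b s : ℝ) : ℝ :=
  (volume { x ∈ Icc a b | f x ≤ s }).toReal

lemma lev_subset (f : ℝ → ℝ) (a b s : ℝ) : { x ∈ Icc a b | f x ≤ s } ⊆ Icc a b :=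
  fun _ hx => hx.1

lemma lev_vol_ne_top (f : ℝ → ℝ) (a b s : ℝ) :
    volume { x ∈ Icc a b | f x ≤ s } ≠ ⊤ :=
  (((measure_mono (lev_subset f a b s)).trans_lt
    (by rw [Real.volume_Icc]; exact ENNReal.ofReal_lt_top)).ne)

lemma mu_nonneg (f : ℝ → ℝ) (a b s : ℝ) : 0 ≤ mu f a b s := ENNReal.toReal_nonneg

lemma mu_mono (f : ℝ → ℝ) (a b : ℝ) {s s' : ℝ} (h : s ≤ s') :
    mu f a b s ≤ mu f a b s' :=
  ENNReal.toReal_mono (lev_vol_ne_top f a b s')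
    (measure_mono fun x hx => ⟨hx.1, hx.2.trans h⟩)

lemma mu_mono_interval (f : ℝ → ℝ) {a b a' b' : ℝ} (h1 : a ≤ a') (h2 : b' ≤ b) (s : ℝ) :
    mu f a' b' s ≤ mu f a b s :=
  ENNReal.toReal_mono (lev_vol_ne_top f a b s)
    (measure_mono fun x hx => ⟨⟨h1.trans hx.1.1, hx.1.2.trans h2⟩, hx.2⟩)

lemma mu_split (f : ℝ → ℝ) {a b a' b' : ℝ} (h1 : a ≤ a') (h2 : a' ≤ b') (h3 : b' ≤ b) (s : ℝ) :
    mu f a b s ≤ mu f a' b' s + ((a' - a) + (b - b')) := by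
  have hsub : { x ∈ Icc a b | f x ≤ s } ⊆
      { x ∈ Icc a' b' | f x ≤ s } ∪ (Icc a a' ∪ Icc b' b) := by
    intro x hx
    rcases le_or_gt a' x with h | h
    · rcases le_or_gt x b' with h' | h'
      · exact Or.inl ⟨⟨h, h'⟩, hx.2⟩
      · exact Or.inr (Or.inr ⟨h'.le, hx.1.2⟩)
    · exact Or.inr (Or.inl ⟨hx.1.1, h.le⟩)
  have hv : volume { x ∈ Icc a b | f x ≤ s } ≤
      volume { x ∈ Icc a' b' | f x ≤ s } + (ENNReal.ofReal (a' - a) + ENNReal.ofReal (b - b')) := by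
    refine (measure_mono hsub).trans ?_
    refine (measure_union_le _ _).trans ?_
    gcongr
    refine (measure_union_le _ _).trans ?_
    rw [Real.volume_Icc, Real.volume_Icc]
  have := ENNReal.toReal_mono
    (by
      apply ENNReal.add_ne_top.mpr
      exact ⟨lev_vol_ne_top f a' b' s, by finiteness⟩) hv
  rw [ENNReal.toReal_add (lev_vol_ne_top f a' b' s) (by finiteness),
    ENNReal.toReal_add (by finiteness) (by finiteness),
    ENNReal.toReal_ofReal (by linarith), ENNReal.toReal_ofReal (by linarith)] at this
  exact this

/-- chord lemma: a nondegenerate subinterval on which `f` takes values in `(u, v)`. -/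
lemma chord (f : ℝ → ℝ) {a b xm xM u v : ℝ} (hab : a < b)
    (hf : ContinuousOn f (Icc a b)) (hxm : xm ∈ Icc a b) (hxM : xM ∈ Icc a b)
    (hu : f xm ≤ u) (hv : v ≤ f xM) (huv : u < v) :
    ∃ l r, l < r ∧ Icc l r ⊆ Icc a b ∧ ∀ x ∈ Icc l r, u < f x ∧ f x < v := by
  set w := (u + v) / 2 with hw
  have hsub : uIcc xm xM ⊆ Icc a b := uIcc_subset_Icc hxm hxM
  have hwmem : w ∈ uIcc (f xm) (f xM) := by
    rw [mem_uIcc]; left; constructor <;> [linarith; linarith]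
  obtain ⟨x0, hx0, hfx0⟩ := intermediate_value_uIcc (hf.mono hsub) hwmem
  have hx0' : x0 ∈ Icc a b := hsub hx0
  have hc : ContinuousWithinAt f (Icc a b) x0 := hf x0 hx0'
  rw [Metric.continuousWithinAt_iff] at hc
  obtain ⟨d, hd, hball⟩ := hc ((v - u) / 2) (by linarith)
  refine ⟨max a (x0 - d/2), min b (x0 + d/2), ?_, ?_, ?_⟩
  · rcases hx0' with ⟨h1, h2⟩
    apply max_lt <;> apply lt_min <;> linarith
  · intro x hx
    exact ⟨(le_max_left a _).trans hx.1, hx.2.trans (min_le_left b _)⟩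
  · intro x hx
    have hxab : x ∈ Icc a b :=
      ⟨(le_max_left a _).trans hx.1, hx.2.trans (min_le_left b _)⟩
    have h1 : x0 - d/2 ≤ x := (le_max_right a _).trans hx.1
    have h2 : x ≤ x0 + d/2 := hx.2.trans (min_le_right b _)
    have hdist : dist x x0 < d := by
      rw [Real.dist_eq, abs_lt]; constructor <;> linarith
    have := hball hxab hdist
    rw [hfx0, Real.dist_eq, abs_lt] at this
    constructor <;> [skip; skip] <;> simp only [hw] at this ⊢ <;> cases this <;> linarith


variable (f : ℝ → ℝ) {a b xm xM : ℝ}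

lemma key_step (hab : a < b) (hf : ContinuousOn f (Icc a b))
    (hxm : xm ∈ Icc a b) (hxM : xM ∈ Icc a b) {ε' : ℝ} (hε' : 0 < ε')
    {s0 : ℝ} (hs0 : s0 ∈ Icc (f xm) (f xM - ε')) :
    ∃ w > 0, ∀ s : ℝ, |s - s0| < ε'/4 → mu f a b s + w ≤ mu f a b (s + ε') := by
  obtain ⟨l, r, hlr, hJ, hJval⟩ := chord f hab hf hxm hxM
    (u := s0 + ε'/4) (v := s0 + 3*ε'/4) (by have := hs0.1; linarith)
    (by have := hs0.2; linarith) (by linarith)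
  refine ⟨r - l, by linarith, fun s hs => ?_⟩
  rw [abs_lt] at hs
  have hdisj : Disjoint { x ∈ Icc a b | f x ≤ s } (Icc l r) := by
    rw [Set.disjoint_left]
    intro x hx hxJ
    have := (hJval x hxJ).1
    have := hx.2
    linarith
  have hsub : { x ∈ Icc a b | f x ≤ s } ∪ Icc l r ⊆ { x ∈ Icc a b | f x ≤ s + ε' } := by
    rintro x (hx | hx)
    · exact ⟨hx.1, by linarith [hx.2]⟩
    · exact ⟨hJ hx, by linarith [(hJval x hx).2]⟩
  have hvol : volume { x ∈ Icc a b | f x ≤ s } + ENNReal.ofReal (r - l) ≤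
      volume { x ∈ Icc a b | f x ≤ s + ε' } := by
    rw [← Real.volume_Icc, ← measure_union hdisj measurableSet_Icc]
    exact measure_mono hsub
  have := ENNReal.toReal_mono (lev_vol_ne_top f a b (s + ε')) hvol
  rw [ENNReal.toReal_add (lev_vol_ne_top f a b s) (by finiteness),
    ENNReal.toReal_ofReal (by linarith)] at this
  exact this

lemma uniform_gap (hab : a < b) (hf : ContinuousOn f (Icc a b))
    (hxm : xm ∈ Icc a b) (hxM : xM ∈ Icc a b) {ε' : ℝ} (hε' : 0 < ε') :
    ∃ η > 0, ∀ s : ℝ, f xm ≤ s → s + ε' ≤ f xM →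
      mu f a b s + η ≤ mu f a b (s + ε') := by
  set K := Icc (f xm) (f xM - ε') with hK
  rcases isEmpty_or_nonempty K with hKe | hKne
  · refine ⟨1, one_pos, fun s h1 h2 => absurd ?_ (fun h => hKe.false ⟨s, h⟩)⟩
    exact ⟨h1, by linarith⟩
  · obtain ⟨⟨s1, hs1⟩⟩ := hKne
    obtain ⟨T, hTK, hTcov⟩ := (isCompact_Icc (a := f xm) (b := f xM - ε')).elim_nhds_subcover
      (fun s0 => Metric.ball s0 (ε'/4))
      (fun s0 _ => Metric.ball_mem_nhds s0 (by linarith))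
    have hT : T.Nonempty := by
      obtain ⟨s0, hs0T, _⟩ := Set.mem_iUnion₂.mp (hTcov hs1)
      exact ⟨s0, hs0T⟩
    choose! w hwpos hkey using fun s0 (h : s0 ∈ K) =>
      key_step f hab hf hxm hxM hε' h
    refine ⟨T.inf' hT w, ?_, ?_⟩
    · rw [gt_iff_lt, Finset.lt_inf'_iff]
      exact fun s0 hs0 => hwpos s0 (hTK s0 hs0)
    · intro s h1 h2
      have hsK : s ∈ K := ⟨h1, by linarith⟩
      obtain ⟨s0, hs0T, hsball⟩ := Set.mem_iUnion₂.mp (hTcov hsK)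
      have hw : mu f a b s + w s0 ≤ mu f a b (s + ε') :=
        hkey s0 (hTK s0 hs0T) s (by
          rw [Metric.mem_ball, Real.dist_eq] at hsball; exact hsball)
      have : T.inf' hT w ≤ w s0 := Finset.inf'_le w hs0T
      linarith


lemma lev_nonempty (f : ℝ → ℝ) {a b s t : ℝ} (ht : 0 < t) (h : t ≤ mu f a b s) :
    ∃ x ∈ Icc a b, f x ≤ s := by
  by_contra hc
  push_neg at hc
  have : { x ∈ Icc a b | f x ≤ s } = ∅ := by
    ext x; simp only [mem_setOf_eq, mem_empty_iff_false, iff_false, not_and, not_le]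
    exact fun hx => hc x hx
  rw [mu, this] at h
  simp at h
  linarith

lemma mu_of_max (f : ℝ → ℝ) {a b s : ℝ} (hab : a ≤ b) (h : ∀ x ∈ Icc a b, f x ≤ s) :
    mu f a b s = b - a := by
  have : { x ∈ Icc a b | f x ≤ s } = Icc a b := by
    ext x
    exact ⟨fun hx => hx.1, fun hx => ⟨hx, h x hx⟩⟩
  rw [mu, this, Real.volume_Icc, ENNReal.toReal_ofReal (by linarith)]


end MonReAux

open MonReAux


lemma monRe_eq (f : ℝ → ℝ) (a b t : ℝ) :
    monRe f a b t = sInf { s : ℝ | t ≤ mu f a b s } := rfl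

theorem monRe_cutoff (f : ℝ → ℝ) (a b : ℝ) (hab : a ≤ b)
    (hf : ContinuousOn f (Icc a b)) :
    ∀ ε > 0, ∃ δ > 0, ∀ a' b' : ℝ, a ≤ a' → a' ≤ b' → b' ≤ b →
      (b - a) - (b' - a') < δ →
      ∀ t ∈ Ioc 0 (b' - a'), |monRe f a b t - monRe f a' b' t| < ε := by
  intro ε hε
  rcases eq_or_lt_of_le hab with heq | hlt
  · refine ⟨1, one_pos, fun a' b' h1 h2 h3 _ t ht => absurd ht.1 ?_⟩
    subst heq
    push_neg
    linarith [ht.2]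
  · obtain ⟨xm, hxm, hm⟩ := isCompact_Icc.exists_isMinOn (nonempty_Icc.mpr hab) hf
    obtain ⟨xM, hxM, hM⟩ := isCompact_Icc.exists_isMaxOn (nonempty_Icc.mpr hab) hf
    rw [isMinOn_iff] at hm
    rw [isMaxOn_iff] at hM
    obtain ⟨η, hη, hgap⟩ := uniform_gap f hlt hf hxm hxM (ε' := ε/2) (by linarith)
    refine ⟨η, hη, fun a' b' ha' hab' hb' hδ t ht => ?_⟩
    obtain ⟨ht0, htle⟩ := ht
    set S := { s : ℝ | t ≤ mu f a b s } with hS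
    set S' := { s : ℝ | t ≤ mu f a' b' s } with hS'
    have hsubIcc : Icc a' b' ⊆ Icc a b := Icc_subset_Icc ha' hb'
    have hbddS : BddBelow S := by
      refine ⟨f xm, fun s hs => ?_⟩
      obtain ⟨x, hx, hfx⟩ := lev_nonempty f ht0 hs
      exact (hm x hx).trans hfx
    have hbddS' : BddBelow S' := by
      refine ⟨f xm, fun s hs => ?_⟩
      obtain ⟨x, hx, hfx⟩ := lev_nonempty f ht0 hs
      exact (hm x (hsubIcc hx)).trans hfx
    have hMS' : f xM ∈ S' := by
      show t ≤ mu f a' b' (f xM)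
      rw [mu_of_max f hab' fun x hx => hM x (hsubIcc hx)]
      exact htle
    have hMS : f xM ∈ S := by
      show t ≤ mu f a b (f xM)
      rw [mu_of_max f hab hM]
      linarith
    have h1 : monRe f a b t ≤ monRe f a' b' t := by
      rw [monRe_eq, monRe_eq]
      refine csInf_le_csInf hbddS ⟨f xM, hMS'⟩ fun s hs => ?_
      exact le_trans hs (mu_mono_interval f ha' hb' s)
    obtain ⟨s', hs'S, hs'lt⟩ : ∃ s' ∈ S, s' < monRe f a b t + ε/4 := by
      refine exists_lt_of_csInf_lt ⟨f xM, hMS⟩ ?_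
      rw [← monRe_eq]
      linarith
    have hs'm : f xm ≤ s' := by
      obtain ⟨x, hx, hfx⟩ := lev_nonempty f ht0 hs'S
      exact (hm x hx).trans hfx
    have hclaim : s' + ε/2 ∈ S' := by
      show t ≤ mu f a' b' (s' + ε/2)
      rcases le_or_gt (s' + ε/2) (f xM) with hc | hc
      · have hg := hgap s' hs'm hc
        have hsplit := mu_split f ha' hab' hb' (s' + ε/2)
        have hts' : t ≤ mu f a b s' := hs'S
        linarith
      · rw [mu_of_max f hab' fun x hx => le_trans (hM x (hsubIcc hx)) hc.le]
        exact htle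
    have h3 : monRe f a' b' t ≤ s' + ε/2 := by
      rw [monRe_eq]
      exact csInf_le hbddS' hclaim
    rw [abs_sub_comm, abs_of_nonneg (by linarith)]
    linarith
end

section
/- Let f : [a,b] → ℝ≥0 be a continuous concave function with maximum value M = max{f(t) : t ∈ [a,b]}. If M ≥ b - a, then the monotone reordering satisfies f^#(t) ≥ t for all t ∈ (0, b-a]. -/
open MeasureTheory Set

/-!
A nonnegative concave function on `[a, b]` lies above the tent of height `M = f x₀` over its
maximum point `x₀`, so the sublevel set `{f ≤ s}` is contained in two end intervals of total
length `(s / M) (b - a) ≤ s`. Hence the sublevel sets have measure at most `s`, i.e. `f^#(t) ≥ t`.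
-/

section Tent

variable {E : Type*} [NormedAddCommGroup E] [NormedSpace ℝ E] {s : Set E} {f : E → ℝ} {x y z : E}

theorem ConcaveOn.norm_sub_mul_le_of_mem_segment (hf : ConcaveOn ℝ s f) (hx : x ∈ s) (hy : y ∈ s)
    (hfx : 0 ≤ f x) (hz : z ∈ segment ℝ x y) : ‖z - x‖ * f y ≤ ‖y - x‖ * f z := by
  obtain ⟨α, β, hα, hβ, hαβ, rfl⟩ := hz
  have hdist : α • x + β • y - x = β • (y - x) := by
    rw [eq_sub_of_add_eq hαβ, sub_smul, one_smul, smul_sub]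
    abel
  rw [hdist, norm_smul, Real.norm_of_nonneg hβ]
  calc β * ‖y - x‖ * f y ≤ ‖y - x‖ * (α * f x + β * f y) := by
        nlinarith [norm_nonneg (y - x), mul_nonneg hα hfx]
    _ ≤ ‖y - x‖ * f (α • x + β • y) := by
        gcongr
        simpa only [smul_eq_mul] using hf.2 hx hy hα hβ hαβ

theorem ConcaveOn.norm_sub_le_of_mem_segment {c : ℝ} (hf : ConcaveOn ℝ s f) (hx : x ∈ s)
    (hy : y ∈ s) (hfx : 0 ≤ f x) (hfy : 0 < f y) (hz : z ∈ segment ℝ x y) (hfz : f z ≤ c) :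
    ‖z - x‖ ≤ c / f y * ‖y - x‖ := by
  rw [div_mul_eq_mul_div, le_div_iff₀ hfy]
  calc ‖z - x‖ * f y ≤ ‖y - x‖ * f z := hf.norm_sub_mul_le_of_mem_segment hx hy hfx hz
    _ ≤ ‖y - x‖ * c := by gcongr
    _ = c * ‖y - x‖ := mul_comm _ _

end Tent

theorem volume_sublevel_le_of_concaveOn {f : ℝ → ℝ} {a b x₀ s : ℝ}
    (hf : ConcaveOn ℝ (Icc a b) f) (ha : 0 ≤ f a) (hb : 0 ≤ f b)
    (hx₀ : x₀ ∈ Icc a b) (hfx₀ : 0 < f x₀) (hs : 0 ≤ s) :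
    volume {x ∈ Icc a b | f x ≤ s} ≤ ENNReal.ofReal (s / f x₀ * (b - a)) := by
  have hab : a ≤ b := hx₀.1.trans hx₀.2
  have hsub : {x ∈ Icc a b | f x ≤ s} ⊆
      Icc a (a + s / f x₀ * (x₀ - a)) ∪ Icc (b - s / f x₀ * (b - x₀)) b := by
    rintro x ⟨hx, hfx⟩
    rcases le_total x x₀ with hxx₀ | hx₀x
    · have hseg : x ∈ segment ℝ a x₀ := by
        rw [segment_eq_Icc hx₀.1]
        exact ⟨hx.1, hxx₀⟩
      have h := hf.norm_sub_le_of_mem_segment (left_mem_Icc.2 hab) hx₀ ha hfx₀ hseg hfx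
      rw [Real.norm_of_nonneg (sub_nonneg.2 hx.1), Real.norm_of_nonneg (sub_nonneg.2 hx₀.1)] at h
      exact Or.inl ⟨hx.1, by linarith⟩
    · have hseg : x ∈ segment ℝ b x₀ := by
        rw [segment_symm, segment_eq_Icc hx₀.2]
        exact ⟨hx₀x, hx.2⟩
      have h := hf.norm_sub_le_of_mem_segment (right_mem_Icc.2 hab) hx₀ hb hfx₀ hseg hfx
      rw [Real.norm_of_nonpos (sub_nonpos.2 hx.2), Real.norm_of_nonpos (sub_nonpos.2 hx₀.2)] at h
      exact Or.inr ⟨by linarith, hx.2⟩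
  have hr : 0 ≤ s / f x₀ := div_nonneg hs hfx₀.le
  calc volume {x ∈ Icc a b | f x ≤ s}
      ≤ volume (Icc a (a + s / f x₀ * (x₀ - a))) + volume (Icc (b - s / f x₀ * (b - x₀)) b) :=
        (measure_mono hsub).trans (measure_union_le _ _)
    _ = ENNReal.ofReal (s / f x₀ * (x₀ - a)) + ENNReal.ofReal (s / f x₀ * (b - x₀)) := by
        rw [Real.volume_Icc, Real.volume_Icc, add_sub_cancel_left, sub_sub_cancel]
    _ = ENNReal.ofReal (s / f x₀ * (b - a)) := by
        rw [← ENNReal.ofReal_add (mul_nonneg hr (sub_nonneg.2 hx₀.1))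
          (mul_nonneg hr (sub_nonneg.2 hx₀.2))]
        ring_nf

theorem monRe_ge_id_of_concave_general (f : ℝ → ℝ) (a b : ℝ)
    (hconc : ConcaveOn ℝ (Icc a b) f)
    (hpos : ∀ x ∈ Icc a b, 0 ≤ f x) (M : ℝ)
    (hM : IsGreatest (f '' Icc a b) M) (hMba : b - a ≤ M) :
    ∀ t ∈ Ioc 0 (b - a), t ≤ monRe f a b t := by
  rintro t ⟨ht, htba⟩
  obtain ⟨x₀, hx₀, rfl⟩ := hM.1
  have hab : a ≤ b := hx₀.1.trans hx₀.2
  have hfx₀ : 0 < f x₀ := by linarith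
  refine le_csInf ⟨f x₀, ?_⟩ fun s hs => ?_
  · have hall : {x ∈ Icc a b | f x ≤ f x₀} = Icc a b :=
      sep_eq_self_iff_mem_true.2 fun x hx => hM.2 (mem_image_of_mem f hx)
    simpa only [mem_ofPred_eq, hall, Real.volume_Icc, ENNReal.toReal_ofReal (sub_nonneg.2 hab)]
  · have hs : t ≤ (volume {x ∈ Icc a b | f x ≤ s}).toReal := hs
    obtain ⟨x, hx, hfx⟩ : {x ∈ Icc a b | f x ≤ s}.Nonempty :=
      nonempty_of_measure_ne_zero fun h => by rw [h, ENNReal.toReal_zero] at hs; linarith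
    have hs0 : 0 ≤ s := (hpos x hx).trans hfx
    calc t ≤ (volume {x ∈ Icc a b | f x ≤ s}).toReal := hs
      _ ≤ s / f x₀ * (b - a) :=
        ENNReal.toReal_le_of_le_ofReal (by positivity) <| volume_sublevel_le_of_concaveOn hconc
          (hpos a (left_mem_Icc.2 hab)) (hpos b (right_mem_Icc.2 hab)) hx₀ hfx₀ hs0
      _ ≤ s / f x₀ * f x₀ := by gcongr
      _ = s := div_mul_cancel₀ s hfx₀.ne'

theorem monRe_ge_id_of_concave (f : ℝ → ℝ) (a b : ℝ) (hab : a ≤ b)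
    (hf : ContinuousOn f (Icc a b)) (hconc : ConcaveOn ℝ (Icc a b) f)
    (hpos : ∀ x ∈ Icc a b, 0 ≤ f x) (M : ℝ)
    (hM : IsGreatest (f '' Icc a b) M) (hMba : b - a ≤ M) :
    ∀ t ∈ Ioc 0 (b - a), t ≤ monRe f a b t :=
  monRe_ge_id_of_concave_general f a b hconc hpos M hM hMba
end

section
/- Let g : [a,b] → ℝ be the piecewise linear 'tent' function which is 0 at a and b and attains value b - a at some interior point c ∈ (a,b), linear on [a,c] and on [c,b]. Then its monotone reordering satisfies g^#(t) = t for all t ∈ (0, b-a]. -/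
open MeasureTheory Set

theorem monRe_tent (a b c : ℝ) (hc : c ∈ Ioo a b) (g : ℝ → ℝ)
    (hg₁ : ∀ t ∈ Icc a c, g t = (t - a) / (c - a) * (b - a))
    (hg₂ : ∀ t ∈ Icc c b, g t = (b - t) / (b - c) * (b - a)) :
    ∀ t ∈ Ioc 0 (b - a), monRe g a b t = t := by
  obtain ⟨hac, hcb⟩ := hc
  have hba : (0:ℝ) < b - a := by linarith
  have hca : (0:ℝ) < c - a := by linarith
  have hbc : (0:ℝ) < b - c := by linarith
  have hg0 : ∀ x ∈ Icc a b, 0 ≤ g x := by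
    intro x ⟨hax, hxb⟩
    rcases le_total x c with hxc | hcx
    · rw [hg₁ x ⟨hax, hxc⟩]
      have h1 : 0 ≤ (x - a) / (c - a) := div_nonneg (by linarith) hca.le
      nlinarith
    · rw [hg₂ x ⟨hcx, hxb⟩]
      have h1 : 0 ≤ (b - x) / (b - c) := div_nonneg (by linarith) hbc.le
      nlinarith
  have hgba : ∀ x ∈ Icc a b, g x ≤ b - a := by
    intro x ⟨hax, hxb⟩
    rcases le_total x c with hxc | hcx
    · rw [hg₁ x ⟨hax, hxc⟩, div_mul_eq_mul_div, div_le_iff₀ hca]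
      nlinarith
    · rw [hg₂ x ⟨hcx, hxb⟩, div_mul_eq_mul_div, div_le_iff₀ hbc]
      nlinarith
  have key : ∀ s : ℝ, 0 ≤ s → s ≤ b - a →
      (volume { x ∈ Icc a b | g x ≤ s }).toReal = s := by
    intro s hs0 hs1
    set α := a + s * (c - a) / (b - a) with hα
    set β := b - s * (b - c) / (b - a) with hβ
    have hd1 : (0:ℝ) ≤ s * (c - a) / (b - a) :=
      div_nonneg (by nlinarith) hba.le
    have hd2 : (0:ℝ) ≤ s * (b - c) / (b - a) :=
      div_nonneg (by nlinarith) hba.le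
    have hαa : a ≤ α := by rw [hα]; linarith
    have hβb : β ≤ b := by rw [hβ]; linarith
    have hαc : α ≤ c := by
      have : s * (c - a) / (b - a) ≤ c - a := by
        rw [div_le_iff₀ hba]; nlinarith
      rw [hα]; linarith
    have hcβ : c ≤ β := by
      have : s * (b - c) / (b - a) ≤ b - c := by
        rw [div_le_iff₀ hba]; nlinarith
      rw [hβ]; linarith
    have hsum : (α - a) + (b - β) = s := by
      rw [hα, hβ]; field_simp; ring
    have hset : { x ∈ Icc a b | g x ≤ s } = Icc a α ∪ Icc β b := by
      ext x
      simp only [mem_setOf_eq, mem_Icc, mem_union, Set.sep_setOf]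
      constructor
      · rintro ⟨⟨hax, hxb⟩, hgx⟩
        rcases le_total x c with hxc | hcx
        · left
          refine ⟨hax, ?_⟩
          rw [hg₁ x ⟨hax, hxc⟩, div_mul_eq_mul_div, div_le_iff₀ hca] at hgx
          rw [hα, ← sub_le_iff_le_add', le_div_iff₀ hba]
          nlinarith
        · right
          refine ⟨?_, hxb⟩
          rw [hg₂ x ⟨hcx, hxb⟩, div_mul_eq_mul_div, div_le_iff₀ hbc] at hgx
          rw [hβ, sub_le_comm, le_div_iff₀ hba]
          nlinarith
      · rintro (⟨hax, hxα⟩ | ⟨hβx, hxb⟩)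
        · have hxc : x ≤ c := le_trans hxα hαc
          refine ⟨⟨hax, by linarith⟩, ?_⟩
          rw [hg₁ x ⟨hax, hxc⟩, div_mul_eq_mul_div, div_le_iff₀ hca]
          rw [hα, ← sub_le_iff_le_add', le_div_iff₀ hba] at hxα
          nlinarith
        · have hcx : c ≤ x := le_trans hcβ hβx
          refine ⟨⟨by linarith, hxb⟩, ?_⟩
          rw [hg₂ x ⟨hcx, hxb⟩, div_mul_eq_mul_div, div_le_iff₀ hbc]
          rw [hβ, sub_le_comm, le_div_iff₀ hba] at hβx
          nlinarith
    rw [hset]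
    have hinter : Icc a α ∩ Icc β b = Icc β α := by
      rw [Icc_inter_Icc, max_eq_right (by linarith), min_eq_left (by linarith)]
    have hvinter : volume (Icc β α) = 0 := by
      rw [Real.volume_Icc, ENNReal.ofReal_eq_zero]
      linarith
    have := measure_union_add_inter (μ := volume) (Icc a α) measurableSet_Icc
      (t := Icc β b)
    rw [hinter, hvinter, add_zero] at this
    rw [this, Real.volume_Icc, Real.volume_Icc, ← ENNReal.ofReal_add
      (by linarith) (by linarith), ENNReal.toReal_ofReal (by linarith)]
    linarith
  intro t ⟨ht0, ht1⟩
  have hSet : { s : ℝ | t ≤ (volume { x ∈ Icc a b | g x ≤ s }).toReal } = Ici t := by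
    ext s
    simp only [mem_setOf_eq, mem_Ici]
    constructor
    · intro h
      by_contra hst
      push_neg at hst
      rcases lt_or_ge s 0 with hs | hs
      · have hempty : { x ∈ Icc a b | g x ≤ s } = ∅ := by
          ext x
          simp only [mem_setOf_eq, mem_empty_iff_false, iff_false, not_and]
          intro hx hgx
          have := hg0 x hx
          linarith
        rw [hempty] at h
        simp at h
        linarith
      · rw [key s hs (by linarith)] at h
        linarith
    · intro hts
      rcases le_total s (b - a) with hs | hs
      · rw [key s (by linarith) hs]
        exact hts
      · have hfull : { x ∈ Icc a b | g x ≤ s } = Icc a b := by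
          ext x
          simp only [mem_setOf_eq, mem_Icc]
          constructor
          · rintro ⟨hx, _⟩; exact hx
          · intro hx
            exact ⟨hx, le_trans (hgba x hx) hs⟩
        rw [hfull, Real.volume_Icc, ENNReal.toReal_ofReal hba.le]
        linarith
  rw [monRe, hSet, csInf_Ici]
end

section
/- Let P be a convex open subset of ℝ² with compact closure, and let [a,b] be the image of the closure of P under projection to the x-axis. Then the function f : [a,b] → ℝ≥0 sending t to the length (1-dimensional Lebesgue measure) of the vertical section {y : (t,y) ∈ closure(P)} is concave. -/
/-!
Over each `t`, the section of a compact convex set `K ⊆ ℝ²` is the interval from its infimum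
`m t` to its supremum `M t`. A convex combination of the top (bottom) points of two sections lies
in `K`, over the same combination of abscissae, so `M` is concave and `m` convex; hence the section
length `M - m` is concave.
-/

open MeasureTheory Set

section Sections

variable {𝕜 E F : Type*} [Semiring 𝕜] [PartialOrder 𝕜] [AddCommMonoid E] [AddCommMonoid F]
  [Module 𝕜 E] [Module 𝕜 F] {K : Set (E × F)}

theorem Convex.prodMk_combo_mem (hK : Convex 𝕜 K) {x y : E} {u v : F}
    (hu : u ∈ Prod.mk x ⁻¹' K) (hv : v ∈ Prod.mk y ⁻¹' K) {a b : 𝕜} (ha : 0 ≤ a) (hb : 0 ≤ b)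
    (hab : a + b = 1) : a • u + b • v ∈ Prod.mk (a • x + b • y) ⁻¹' K := by
  simpa only [mem_preimage, Prod.smul_mk, Prod.mk_add_mk] using hK hu hv ha hb hab

theorem Convex.preimage_prodMk (hK : Convex 𝕜 K) (t : E) : Convex 𝕜 (Prod.mk t ⁻¹' K) :=
  fun _ hu _ hv _ _ ha hb hab => by
    simpa only [Convex.combo_self hab] using hK.prodMk_combo_mem hu hv ha hb hab

end Sections

theorem IsCompact.preimage_prodMk {α β : Type*} [TopologicalSpace α] [TopologicalSpace β]
    [T2Space (α × β)] {K : Set (α × β)} (hK : IsCompact K) (t : α) :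
    IsCompact (Prod.mk t ⁻¹' K) :=
  (hK.image continuous_snd).of_isClosed_subset (hK.isClosed.preimage (.prodMk_right t))
    fun y hy => ⟨(t, y), hy, rfl⟩

theorem Convex.volume_toReal_eq_sSup_sub_sInf {s : Set ℝ} (hs : Convex ℝ s) (hc : IsCompact s) :
    (volume s).toReal = sSup s - sInf s := by
  rcases s.eq_empty_or_nonempty with rfl | hne
  · simp -- `sSup ∅ = sInf ∅ = 0` in `ℝ`
  have hle : sInf s ≤ sSup s := csInf_le_csSup hne hc.bddBelow hc.bddAbove
  nth_rw 1 [eq_Icc_of_connected_compact (hs.isConnected hne) hc]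
  rw [Real.volume_Icc, ENNReal.toReal_ofReal (sub_nonneg.2 hle)]

section PlaneSections

variable {K : Set (ℝ × ℝ)}

theorem Convex.concaveOn_sSup_preimage_prodMk (hK : Convex ℝ K) (hc : IsCompact K) :
    ConcaveOn ℝ (Prod.fst '' K) (fun t => sSup (Prod.mk t ⁻¹' K)) := by
  refine ⟨hK.linear_image (LinearMap.fst ℝ ℝ ℝ), ?_⟩
  rintro _ ⟨⟨x, u⟩, hu, rfl⟩ _ ⟨⟨y, v⟩, hv, rfl⟩ a b ha hb hab
  have htop_x := (hc.preimage_prodMk x).sSup_mem ⟨u, hu⟩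
  have htop_y := (hc.preimage_prodMk y).sSup_mem ⟨v, hv⟩
  exact le_csSup (hc.preimage_prodMk _).bddAbove (hK.prodMk_combo_mem htop_x htop_y ha hb hab)

theorem Convex.convexOn_sInf_preimage_prodMk (hK : Convex ℝ K) (hc : IsCompact K) :
    ConvexOn ℝ (Prod.fst '' K) (fun t => sInf (Prod.mk t ⁻¹' K)) := by
  refine ⟨hK.linear_image (LinearMap.fst ℝ ℝ ℝ), ?_⟩
  rintro _ ⟨⟨x, u⟩, hu, rfl⟩ _ ⟨⟨y, v⟩, hv, rfl⟩ a b ha hb hab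
  have hbot_x := (hc.preimage_prodMk x).sInf_mem ⟨u, hu⟩
  have hbot_y := (hc.preimage_prodMk y).sInf_mem ⟨v, hv⟩
  exact csInf_le (hc.preimage_prodMk _).bddBelow (hK.prodMk_combo_mem hbot_x hbot_y ha hb hab)

end PlaneSections

theorem section_length_concave_general (P : Set (ℝ × ℝ)) (hP : Convex ℝ P)
    (hcpt : IsCompact (closure P)) :
    ConcaveOn ℝ (Prod.fst '' closure P)
      (fun t => (volume { y : ℝ | (t, y) ∈ closure P }).toReal) := by
  have hK : Convex ℝ (closure P) := hP.closure
  refine ((hK.concaveOn_sSup_preimage_prodMk hcpt).sub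
    (hK.convexOn_sInf_preimage_prodMk hcpt)).congr fun t _ => ?_
  exact ((hK.preimage_prodMk t).volume_toReal_eq_sSup_sub_sInf (hcpt.preimage_prodMk t)).symm

theorem section_length_concave (P : Set (ℝ × ℝ)) (hP : Convex ℝ P) (hPo : IsOpen P)
    (hne : P.Nonempty) (hcpt : IsCompact (closure P)) :
    ConcaveOn ℝ (Prod.fst '' closure P)
      (fun t => (volume { y : ℝ | (t, y) ∈ closure P }).toReal) :=
  section_length_concave_general P hP hcpt
end

section
/- Let P be a convex open subset of ℝ² with compact closure and [a,b] the projection of its closure to the x-axis. Then the vertical section length function f(t) = length of p_x⁻¹(t) ∩ closure(P) is continuous on [a,b]. -/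
/-!
Write `u(t)` and `ℓ(t)` for the supremum and infimum of the section of `C = closure P` over `t`,
so that the section is the interval `[ℓ(t), u(t)]` and `f = u - ℓ`. By compactness `u` is upper
semicontinuous: the part of `C` at height `≥ c` projects onto a closed set. By convexity `u` is
concave on `[a, b]`, so it lies above its chords from any point, which makes it lower
semicontinuous. Hence `u` is continuous, and so is `ℓ`, the negative of the upper boundary of
the reflection of `C` in the `x`-axis.
-/

open MeasureTheory Set Filter Topology

section SectionBounds

variable {X : Type*} [TopologicalSpace X] {C : Set (X × ℝ)}

theorem IsCompact.preimage_prodMk_s17 [T1Space X] (hC : IsCompact C) (x : X) :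
    IsCompact {y : ℝ | (x, y) ∈ C} := by
  convert (hC.inter_right ((isClosed_singleton (x := x)).preimage continuous_fst)).image
    continuous_snd
  ext y
  constructor
  · intro hy
    exact ⟨(x, y), ⟨hy, rfl⟩, rfl⟩
  · rintro ⟨⟨x', y'⟩, ⟨hp, rfl⟩, rfl⟩
    exact hp

theorem IsCompact.mk_sSup_mem [T1Space X] (hC : IsCompact C) {x : X}
    (hx : x ∈ Prod.fst '' C) : (x, sSup {y : ℝ | (x, y) ∈ C}) ∈ C := by
  obtain ⟨p, hp, rfl⟩ := hx
  exact (hC.preimage_prodMk_s17 p.1).sSup_mem ⟨p.2, hp⟩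

theorem IsCompact.upperSemicontinuousOn_sSup [T2Space X] (hC : IsCompact C) :
    UpperSemicontinuousOn (fun x => sSup {y : ℝ | (x, y) ∈ C}) (Prod.fst '' C) := by
  intro x _ c hc
  have hE : IsClosed (Prod.fst '' (C ∩ {p | c ≤ p.2})) :=
    ((hC.inter_right (isClosed_le continuous_const continuous_snd)).image
      continuous_fst).isClosed
  have hxE : x ∉ Prod.fst '' (C ∩ {p | c ≤ p.2}) := by
    rintro ⟨p, ⟨hp, hcp⟩, rfl⟩
    exact (hcp.trans (le_csSup (hC.preimage_prodMk_s17 p.1).bddAbove hp)).not_gt hc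
  filter_upwards [nhdsWithin_le_nhds (hE.isOpen_compl.mem_nhds hxE), self_mem_nhdsWithin]
    with x' hx'E hx'
  exact lt_of_not_ge fun hle => hx'E ⟨_, ⟨hC.mk_sSup_mem hx', hle⟩, rfl⟩

variable [AddCommGroup X] [Module ℝ X] [T1Space X]

theorem Convex.concaveOn_sSup (hCc : Convex ℝ C) (hC : IsCompact C) :
    ConcaveOn ℝ (Prod.fst '' C) (fun x => sSup {y : ℝ | (x, y) ∈ C}) := by
  refine ⟨hCc.linear_image (LinearMap.fst ℝ X ℝ), ?_⟩
  intro x₁ hx₁ x₂ hx₂ a b ha hb hab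
  have hmem := hCc (hC.mk_sSup_mem hx₁) (hC.mk_sSup_mem hx₂) ha hb hab
  simp only [Prod.smul_mk, Prod.mk_add_mk] at hmem
  exact le_csSup (hC.preimage_prodMk_s17 _).bddAbove hmem

theorem Convex.volume_section_toReal (hCc : Convex ℝ C) (hC : IsCompact C) {x : X}
    (hx : x ∈ Prod.fst '' C) :
    (volume {y : ℝ | (x, y) ∈ C}).toReal =
      sSup {y : ℝ | (x, y) ∈ C} - sInf {y : ℝ | (x, y) ∈ C} := by
  set S := {y : ℝ | (x, y) ∈ C}
  have hS : IsCompact S := hC.preimage_prodMk_s17 x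
  have hne : S.Nonempty := by
    obtain ⟨p, hp, rfl⟩ := hx
    exact ⟨p.2, hp⟩
  have hconv : Convex ℝ S :=
    hCc.affine_preimage ((AffineMap.const ℝ ℝ x).prod (AffineMap.id ℝ ℝ))
  rw [show volume S = volume (Icc (sInf S) (sSup S)) from
      congrArg _ (eq_Icc_of_connected_compact (hconv.isConnected hne) hS),
    Real.volume_Icc,
    ENNReal.toReal_ofReal (sub_nonneg.2 (csInf_le_csSup hne hS.bddBelow hS.bddAbove))]

end SectionBounds

theorem ConcaveOn.add_div_mul_sub_le {f : ℝ → ℝ} {s : Set ℝ} (hf : ConcaveOn ℝ s f)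
    {t a x : ℝ} (ht : t ∈ s) (ha : a ∈ s) (hx : x ∈ uIcc t a) :
    f t + (x - t) / (a - t) * (f a - f t) ≤ f x := by
  rcases eq_or_ne a t with rfl | hat
  · rw [uIcc_self, mem_singleton_iff] at hx
    simp [hx]
  set l := (x - t) / (a - t)
  have hl : l ∈ Icc (0 : ℝ) 1 := by
    rcases le_total t a with h | h
    · rw [uIcc_of_le h] at hx
      exact ⟨div_nonneg (by linarith [hx.1]) (by linarith),
        div_le_one_of_le₀ (by linarith [hx.2]) (by linarith)⟩
    · rw [uIcc_of_ge h] at hx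
      exact ⟨div_nonneg_of_nonpos (by linarith [hx.2]) (by linarith),
        div_le_one_of_ge (by linarith [hx.1]) (by linarith)⟩
  have hxl : (1 - l) • t + l • a = x := by
    simp only [smul_eq_mul, l]
    field_simp [sub_ne_zero.2 hat]
    ring
  have hchord := hf.2 ht ha (sub_nonneg.2 hl.2) hl.1 (sub_add_cancel 1 l)
  rw [hxl, smul_eq_mul, smul_eq_mul] at hchord
  linarith

theorem ConcaveOn.lowerSemicontinuousOn_Icc {f : ℝ → ℝ} {a b : ℝ}
    (hf : ConcaveOn ℝ (Icc a b) f) : LowerSemicontinuousOn f (Icc a b) := by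
  intro t ht c hc
  have ha : a ∈ Icc a b := left_mem_Icc.2 (ht.1.trans ht.2)
  have hb : b ∈ Icc a b := right_mem_Icc.2 (ht.1.trans ht.2)
  set g : ℝ → ℝ := fun x =>
    min (f t + (x - t) / (a - t) * (f a - f t)) (f t + (x - t) / (b - t) * (f b - f t))
  have hg : ContinuousAt g t := by fun_prop
  have hgt : g t = f t := by simp [g]
  have hgf : ∀ x ∈ Icc a b, g x ≤ f x := by
    intro x hx
    rcases le_total x t with hxt | htx
    · exact (min_le_left _ _).trans
        (hf.add_div_mul_sub_le ht ha (uIcc_of_ge ht.1 ▸ ⟨hx.1, hxt⟩))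
    · exact (min_le_right _ _).trans
        (hf.add_div_mul_sub_le ht hb (uIcc_of_le ht.2 ▸ ⟨htx, hx.2⟩))
  filter_upwards [nhdsWithin_le_nhds (hg.eventually (lt_mem_nhds (hgt ▸ hc))),
    self_mem_nhdsWithin] with x hcx hx
  exact hcx.trans_le (hgf x hx)

theorem Convex.continuousOn_sSup {C : Set (ℝ × ℝ)} (hCc : Convex ℝ C)
    (hC : IsCompact C) :
    ContinuousOn (fun x => sSup {y : ℝ | (x, y) ∈ C}) (Prod.fst '' C) := by
  rcases (Prod.fst '' C).eq_empty_or_nonempty with hK | hK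
  · rw [hK]
    exact continuousOn_empty _
  have hconc := hCc.concaveOn_sSup hC
  have hIcc : Prod.fst '' C = Icc (sInf (Prod.fst '' C)) (sSup (Prod.fst '' C)) :=
    eq_Icc_of_connected_compact (hconc.1.isConnected hK) (hC.image continuous_fst)
  refine continuousOn_iff_lower_upperSemicontinuousOn.2 ⟨?_, hC.upperSemicontinuousOn_sSup⟩
  rw [hIcc] at hconc ⊢
  exact hconc.lowerSemicontinuousOn_Icc

theorem Convex.continuousOn_sInf {C : Set (ℝ × ℝ)} (hCc : Convex ℝ C)
    (hC : IsCompact C) :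
    ContinuousOn (fun x => sInf {y : ℝ | (x, y) ∈ C}) (Prod.fst '' C) := by
  let σ : (ℝ × ℝ) ≃L[ℝ] ℝ × ℝ := (ContinuousLinearEquiv.refl ℝ ℝ).prodCongr (.neg ℝ)
  have hfst : Prod.fst '' (σ ⁻¹' C) = Prod.fst '' C := by
    rw [← σ.image_symm_eq_preimage, image_image]
    rfl
  have h : ContinuousOn (fun x => sSup {y : ℝ | (x, y) ∈ σ ⁻¹' C}) (Prod.fst '' (σ ⁻¹' C)) :=
    (hCc.linear_preimage σ.toLinearMap).continuousOn_sSup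
      (σ.toHomeomorph.isCompact_preimage.2 hC)
  rw [hfst] at h
  -- the section of `σ ⁻¹' C` is the negated section of `C`, and `sInf S = -sSup (-S)` is `rfl`
  exact h.neg

theorem section_length_continuous_general (P : Set (ℝ × ℝ)) (hP : Convex ℝ P)
    (hcpt : IsCompact (closure P)) :
    ContinuousOn (fun t => (volume { y : ℝ | (t, y) ∈ closure P }).toReal)
      (Prod.fst '' closure P) :=
  ((hP.closure.continuousOn_sSup hcpt).sub (hP.closure.continuousOn_sInf hcpt)).congr
    fun _ ht => hP.closure.volume_section_toReal hcpt ht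

theorem section_length_continuous (P : Set (ℝ × ℝ)) (hP : Convex ℝ P) (hPo : IsOpen P)
    (hne : P.Nonempty) (hcpt : IsCompact (closure P)) :
    ContinuousOn (fun t => (volume { y : ℝ | (t, y) ∈ closure P }).toReal)
      (Prod.fst '' closure P) :=
  section_length_continuous_general P hP hcpt
end
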